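/- In Thompson's group T, for all integers i ≥ 1 and j with 2 ≤ j ≤ i+1, one has c_i^j · x_{j-2}^{-1} = c_{i-1}^{j-1}. -/
import Mathlib


/-- Relators of the standard infinite presentation of Thompson's group `T`,
on generators `Sum.inl i ↦ x_i` and `Sum.inr i ↦ c_i`. -/
def TRel : Set (FreeGroup (ℕ ⊕ ℕ)) :=
  { r | (∃ i j : ℕ, i < j ∧
        r = FreeGroup.of (Sum.inl j) * FreeGroup.of (Sum.inl i) *
            (FreeGroup.of (Sum.inl i) * FreeGroup.of (Sum.inl (j + 1)))⁻¹) ∨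
    (∃ k n : ℕ, k < n ∧
        r = FreeGroup.of (Sum.inl k) * FreeGroup.of (Sum.inr (n + 1)) *
            (FreeGroup.of (Sum.inr n) * FreeGroup.of (Sum.inl (k + 1)))⁻¹) ∨
    (∃ n : ℕ, r = FreeGroup.of (Sum.inr n) * FreeGroup.of (Sum.inl 0) *
            ((FreeGroup.of (Sum.inr (n + 1))) ^ 2)⁻¹) ∨
    (∃ n : ℕ, r = FreeGroup.of (Sum.inr n) *
            (FreeGroup.of (Sum.inl n) * FreeGroup.of (Sum.inr (n + 1)))⁻¹) ∨
    (∃ n : ℕ, r = (FreeGroup.of (Sum.inr n)) ^ (n + 2)) }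

/-- Thompson's group `T`. -/
abbrev ThompsonT : Type := PresentedGroup TRel

/-- The generator `x_i` of `T`. -/
def x (i : ℕ) : ThompsonT := PresentedGroup.of (Sum.inl i)

/-- The torsion generator `c_i` of `T`. -/
def c (i : ℕ) : ThompsonT := PresentedGroup.of (Sum.inr i)

lemma Trel_eq_one {r : FreeGroup (ℕ ⊕ ℕ)} (hr : r ∈ TRel) :
    PresentedGroup.mk TRel r = 1 := by
  exact (QuotientGroup.eq_one_iff r).mpr (Subgroup.subset_normalClosure hr)

lemma rel3 (n : ℕ) : c n * x 0 = c (n + 1) ^ 2 := by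
  have h := Trel_eq_one (r := FreeGroup.of (Sum.inr n) * FreeGroup.of (Sum.inl 0) *
      ((FreeGroup.of (Sum.inr (n + 1))) ^ 2)⁻¹) (Or.inr (Or.inr (Or.inl ⟨n, rfl⟩)))
  rw [map_mul, map_inv, map_mul, map_pow] at h
  have := mul_inv_eq_one.mp h
  simpa [c, x, PresentedGroup.of] using this

lemma rel2 {k n : ℕ} (hkn : k < n) : x k * c (n + 1) = c n * x (k + 1) := by
  have h := Trel_eq_one (r := FreeGroup.of (Sum.inl k) * FreeGroup.of (Sum.inr (n + 1)) *
      (FreeGroup.of (Sum.inr n) * FreeGroup.of (Sum.inl (k + 1)))⁻¹)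
      (Or.inr (Or.inl ⟨k, n, hkn, rfl⟩))
  rw [map_mul, map_inv, map_mul, map_mul] at h
  have := mul_inv_eq_one.mp h
  simpa [c, x, PresentedGroup.of] using this

lemma key (n : ℕ) : ∀ m, m ≤ n → c n ^ (m + 1) * x m = c (n + 1) ^ (m + 2) := by
  intro m
  induction m with
  | zero => intro _; simpa using rel3 n
  | succ m ih =>
    intro hm
    have hmn : m < n := hm
    have h1 : c n * x (m + 1) = x m * c (n + 1) := (rel2 hmn).symm
    calc c n ^ (m + 1 + 1) * x (m + 1)
        = c n ^ (m + 1) * (c n * x (m + 1)) := by group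
      _ = c n ^ (m + 1) * x m * c (n + 1) := by rw [h1]; group
      _ = c (n + 1) ^ (m + 2) * c (n + 1) := by rw [ih hmn.le]
      _ = c (n + 1) ^ (m + 1 + 2) := by group

/-- Reduction of type (4): for `i ≥ 1` and `2 ≤ j ≤ i + 1`,
`c_i^j * x_{j-2}⁻¹ = c_{i-1}^{j-1}`. -/
theorem reduction_four (i j : ℕ) (hi : 1 ≤ i) (hj : 2 ≤ j) (hji : j ≤ i + 1) :
    c i ^ j * (x (j - 2))⁻¹ = c (i - 1) ^ (j - 1) := by
  obtain ⟨n, rfl⟩ : ∃ n, i = n + 1 := ⟨i - 1, (Nat.succ_pred_eq_of_pos hi).symm⟩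
  obtain ⟨m, rfl⟩ : ∃ m, j = m + 2 := ⟨j - 2, (Nat.sub_add_cancel hj).symm⟩
  have hm : m ≤ n := by omega
  have h := key n m hm
  rw [show m + 2 - 2 = m from rfl, show n + 1 - 1 = n from rfl, show m + 2 - 1 = m + 1 from rfl, ← h,
    mul_inv_cancel_right]
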